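/- Let (X,d,μ) be a space of homogeneous type with open balls and E ⊆ X non-empty. If there exists α > 0 with d(·,E)^{-α} ∈ A₁(X,d,μ), then E is weakly porous with respect to d and μ. -/

import Mathlib

/-!
Fix a ball `B = B(x,r)` and let `ρ > 0` be its maximal hole radius; `ρ > 0` because the weight
`w = d(·,E)^{-α}` is locally integrable, hence finite almost everywhere. A hole of radius close
to `ρ` contains a ball of radius `≈ ρ/K` lying at distance `≳ ρ/K` from `E`, so
`ess inf_B w ≲ ρ^{-α}`. Markov's inequality and the `A₁` condition then bound the measure of
`{z ∈ B : d(z,E) < cρ}` by `C (4Kc)^α μ(B)`, which for small `c` is at most half the measure of the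
concentric ball `B(x, r/2^m)`, `2^m ≥ 2K`. The rest of that small ball lies at distance `≥ cρ`
from `E`; a maximal `2Kγρ`-separated subset of it (finite by doubling) is a `2Kγρ`-net, the balls
of radius `γρ ≤ cρ` around its points are disjoint and avoid `E`, and by doubling they carry a
fixed fraction of `μ(B)`.
-/

open MeasureTheory ENNReal Set

namespace WPA1

variable {X : Type*}

/-- `d` is a quasi-distance on `X` with triangular constant `K`. -/
def QD (d : X → X → ℝ) (K : ℝ) : Prop :=
  1 ≤ K ∧ (∀ x y, 0 ≤ d x y) ∧ (∀ x y, d x y = 0 ↔ x = y) ∧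
    (∀ x y, d x y = d y x) ∧ ∀ x y z, d x z ≤ K * (d x y + d y z)

/-- The `d`-ball of center `x` and radius `r`. -/
def ball (d : X → X → ℝ) (x : X) (r : ℝ) : Set X := {y | d x y < r}

/-- The optimal (least) triangular constant of `d`. -/
noncomputable def Kopt (d : X → X → ℝ) : ℝ := sInf {K | QD d K}

/-- Distance from a point to a set: `d(x,E) = inf_{e ∈ E} d(x,e)`. -/
noncomputable def distE (d : X → X → ℝ) (E : Set X) (x : X) : ℝ :=
  sInf ((d x) '' E)

/-- The maximal `E`-free hole function
`ρ_{d,E}(B_d(x,r)) = sup {0 < s ≤ 2Kr : ∃ y, B_d(y,s) ⊆ B_d(x,r) \ E}`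
(with value `0` when the set is empty, by `Real.sSup` conventions). -/
noncomputable def hole (d : X → X → ℝ) (K : ℝ) (E : Set X) (x : X) (r : ℝ) : ℝ :=
  sSup {s | 0 < s ∧ s ≤ 2 * K * r ∧ ∃ y, ball d y s ⊆ ball d x r \ E}

/-- The maximal hole function `ρ_{d,E}` is doubling with constant `C`. -/
def HoleDoubling (d : X → X → ℝ) (K : ℝ) (E : Set X) (C : ℝ) : Prop :=
  ∀ x r, 0 < r → hole d K E x (2 * r) ≤ C * hole d K E x r

/-- The `d`-balls are open and form neighborhood bases: the ambient topology is
the one induced by the quasi-distance `d`. -/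
def BallsBasis [TopologicalSpace X] (d : X → X → ℝ) : Prop :=
  (∀ x r, IsOpen (ball d x r)) ∧ ∀ x, ∀ U ∈ nhds x, ∃ r > 0, ball d x r ⊆ U

/-- The measure `μ` is doubling (with constant `A`) on `d`-balls, which have
positive finite measure; i.e. `(X,d,μ)` is a space of homogeneous type. -/
def DoublingBalls [MeasurableSpace X] (μ : Measure X) (d : X → X → ℝ) (A : ℝ) : Prop :=
  ∀ x r, 0 < r → 0 < μ (ball d x r) ∧ μ (ball d x r) < ⊤ ∧
    μ (ball d x (2 * r)) ≤ ENNReal.ofReal A * μ (ball d x r)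

/-- `E` is `(σ,γ)`-weakly porous with respect to `d` and `μ`. -/
def WeaklyPorousWith [MeasurableSpace X] (μ : Measure X) (d : X → X → ℝ) (K : ℝ)
    (E : Set X) (σ γ : ℝ) : Prop :=
  ∀ x r, 0 < r → ∃ (n : ℕ) (c : Fin n → X) (ρ : Fin n → ℝ),
    (∀ i j, i ≠ j → Disjoint (ball d (c i) (ρ i)) (ball d (c j) (ρ j))) ∧
    (∀ i, ball d (c i) (ρ i) ⊆ ball d x r \ E) ∧
    (∀ i, γ * hole d K E x r ≤ ρ i) ∧
    (∀ i, ρ i ≤ 2 * K * r) ∧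
    ENNReal.ofReal σ * μ (ball d x r) ≤ ∑ i, μ (ball d (c i) (ρ i))

/-- `E` is weakly porous with respect to `d` and `μ`. -/
def WeaklyPorous [MeasurableSpace X] (μ : Measure X) (d : X → X → ℝ) (K : ℝ)
    (E : Set X) : Prop :=
  ∃ σ γ : ℝ, σ ∈ Set.Ioo (0:ℝ) 1 ∧ γ ∈ Set.Ioo (0:ℝ) 1 ∧ WeaklyPorousWith μ d K E σ γ

/-- The weight `d(·,E)^{-α}`, valued in `ℝ≥0∞` (so it is `∞` on `{d(·,E)=0}`). -/
noncomputable def wgt (d : X → X → ℝ) (E : Set X) (α : ℝ) (x : X) : ℝ≥0∞ :=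
  ENNReal.ofReal (distE d E x) ^ (-α)

/-- `w` is an `A₁(X,d,μ)`-weight: `w` is locally integrable and the mean value of `w`
over every `d`-ball is bounded by a constant times its essential infimum there. -/
def MemA1 [MeasurableSpace X] (μ : Measure X) (d : X → X → ℝ) (w : X → ℝ≥0∞) : Prop :=
  (∀ x r, 0 < r → ∫⁻ y in ball d x r, w y ∂μ < ⊤) ∧
  ∃ C : ℝ, 0 < C ∧ ∀ x r, 0 < r →
    ∫⁻ y in ball d x r, w y ∂μ ≤
      ENNReal.ofReal C * essInf w (μ.restrict (ball d x r)) * μ (ball d x r)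

namespace QD

variable {d : X → X → ℝ} {K : ℝ}

lemma pos (hd : QD d K) : 0 < K := one_pos.trans_le hd.1

lemma nonneg (hd : QD d K) (x y : X) : 0 ≤ d x y := hd.2.1 x y

lemma self_eq_zero (hd : QD d K) (x : X) : d x x = 0 := (hd.2.2.1 x x).mpr rfl

lemma symm (hd : QD d K) (x y : X) : d x y = d y x := hd.2.2.2.1 x y

lemma triangle (hd : QD d K) (x y z : X) : d x z ≤ K * (d x y + d y z) := hd.2.2.2.2 x y z

end QD

section QuasiMetric

variable {d : X → X → ℝ} {K : ℝ} {E : Set X}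

lemma ball_mono (d : X → X → ℝ) (x : X) {r₁ r₂ : ℝ} (h : r₁ ≤ r₂) :
    ball d x r₁ ⊆ ball d x r₂ := fun _ hz => lt_of_lt_of_le hz h

lemma ball_subset_ball (hd : QD d K) {x y : X} {r s : ℝ} (h : K * (d x y + s) ≤ r) :
    ball d y s ⊆ ball d x r := fun z (hz : d y z < s) =>
  calc d x z ≤ K * (d x y + d y z) := hd.triangle x y z
    _ < K * (d x y + s) := mul_lt_mul_of_pos_left (by linarith) hd.pos
    _ ≤ r := h

lemma ball_subset_ball_of_mem_half (hd : QD d K) {x y : X} {r s : ℝ}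
    (hy : y ∈ ball d x (r / (2 * K))) (hs : s ≤ r / (2 * K)) : ball d y s ⊆ ball d x r := by
  have hK := hd.pos
  refine ball_subset_ball hd ?_
  calc K * (d x y + s) ≤ K * (r / (2 * K) + r / (2 * K)) := by
        gcongr
        exact le_of_lt hy
    _ = r := by field_simp; ring

lemma disjoint_ball_ball (hd : QD d K) {y₁ y₂ : X} {u : ℝ} (h : 2 * K * u ≤ d y₁ y₂) :
    Disjoint (ball d y₁ u) (ball d y₂ u) :=
  Set.disjoint_left.mpr fun z (h₁ : d y₁ z < u) (h₂ : d y₂ z < u) => by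
    have htr := hd.triangle y₁ z y₂
    rw [hd.symm z y₂] at htr
    nlinarith [mul_lt_mul_of_pos_left (add_lt_add h₁ h₂) hd.pos]

lemma distE_le (hd : QD d K) {e : X} (he : e ∈ E) (z : X) : distE d E z ≤ d z e :=
  csInf_le ⟨0, fun _ ⟨e', _, he'⟩ => he' ▸ hd.nonneg z e'⟩ ⟨e, he, rfl⟩

lemma le_distE (hE : E.Nonempty) {z : X} {t : ℝ} (h : ∀ e ∈ E, t ≤ d z e) :
    t ≤ distE d E z :=
  le_csInf (hE.image _) fun _ ⟨e, he, hte⟩ => hte ▸ h e he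

lemma disjoint_ball_of_le_distE (hd : QD d K) {y : X} {s : ℝ} (hs : s ≤ distE d E y) :
    Disjoint (ball d y s) E :=
  Set.disjoint_left.mpr fun z (hz : d y z < s) hzE =>
    (hz.trans_le hs).not_ge (distE_le hd hzE y)

lemma le_distE_of_disjoint_ball (hd : QD d K) (hE : E.Nonempty) {y z : X} {s : ℝ}
    (hy : Disjoint (ball d y s) E) (hz : z ∈ ball d y (s / (2 * K))) :
    s / (2 * K) ≤ distE d E z := by
  have hK := hd.pos
  refine le_distE hE fun e he => ?_
  have hse : s ≤ d y e := not_lt.mp fun h => Set.disjoint_left.mp hy h he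
  have hyz : K * d y z < s / 2 := by
    calc K * d y z < K * (s / (2 * K)) := mul_lt_mul_of_pos_left hz hK
      _ = s / 2 := by field_simp
  rw [div_le_iff₀ (by positivity)]
  nlinarith [hd.triangle y z e]

lemma measurable_distE [TopologicalSpace X] [MeasurableSpace X] [OpensMeasurableSpace X]
    (hd : QD d K) (hopen : ∀ x r, IsOpen (ball d x r)) (hE : E.Nonempty) :
    Measurable (distE d E) := by
  refine measurable_of_Iio fun t => ?_
  have hset : distE d E ⁻¹' Iio t = ⋃ e ∈ E, ball d e t := by
    ext z
    simp only [mem_preimage, mem_Iio, mem_iUnion]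
    constructor
    · intro h
      obtain ⟨_, ⟨e, he, rfl⟩, het⟩ := exists_lt_of_csInf_lt (hE.image _) h
      exact ⟨e, he, show d e z < t by rwa [hd.symm]⟩
    · rintro ⟨e, he, h : d e z < t⟩
      exact (distE_le hd he z).trans_lt (by rwa [hd.symm])
  rw [hset]
  exact (isOpen_biUnion fun e _ => hopen e t).measurableSet

end QuasiMetric

section Weight

variable {d : X → X → ℝ} {K : ℝ} {E : Set X} {α : ℝ}

lemma measurable_wgt [TopologicalSpace X] [MeasurableSpace X] [OpensMeasurableSpace X]
    (hd : QD d K) (hopen : ∀ x r, IsOpen (ball d x r)) (hE : E.Nonempty) :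
    Measurable (wgt d E α) :=
  (ENNReal.measurable_ofReal.comp (measurable_distE hd hopen hE)).pow_const (-α)

lemma ofReal_rpow_neg_anti (hα : 0 < α) {a b : ℝ} (h : a ≤ b) :
    ENNReal.ofReal b ^ (-α) ≤ ENNReal.ofReal a ^ (-α) := by
  rw [ENNReal.rpow_neg, ENNReal.rpow_neg]
  exact ENNReal.inv_le_inv.mpr (ENNReal.rpow_le_rpow (ENNReal.ofReal_le_ofReal h) hα.le)

lemma distE_pos_of_wgt_ne_top (hα : 0 < α) {z : X} (h : wgt d E α z ≠ ⊤) : 0 < distE d E z :=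
  lt_of_not_ge fun h0 => h <| by
    rw [wgt, ENNReal.ofReal_eq_zero.mpr h0, ENNReal.zero_rpow_of_neg (neg_neg_of_pos hα)]

end Weight

section Doubling

variable [MeasurableSpace X] {μ : Measure X} {d : X → X → ℝ} {A : ℝ}

lemma measure_ball_two_pow_mul_le (hA : DoublingBalls μ d A) (z : X) {s : ℝ} (hs : 0 < s)
    (n : ℕ) : μ (ball d z (2 ^ n * s)) ≤ ENNReal.ofReal A ^ n * μ (ball d z s) := by
  induction n with
  | zero => simp
  | succ n ih =>
    calc μ (ball d z (2 ^ (n + 1) * s)) = μ (ball d z (2 * (2 ^ n * s))) := by ring_nf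
      _ ≤ ENNReal.ofReal A * μ (ball d z (2 ^ n * s)) := (hA z _ (by positivity)).2.2
      _ ≤ ENNReal.ofReal A * (ENNReal.ofReal A ^ n * μ (ball d z s)) := by gcongr
      _ = ENNReal.ofReal A ^ (n + 1) * μ (ball d z s) := by ring

lemma one_le_of_doublingBalls (hA : DoublingBalls μ d A) (x : X) : 1 ≤ A := by
  obtain ⟨h0, htop, h2⟩ := hA x 1 one_pos
  have h : 1 * μ (ball d x 1) ≤ ENNReal.ofReal A * μ (ball d x 1) := by
    rw [one_mul]
    exact (measure_mono (ball_mono d x (by norm_num))).trans h2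
  exact ENNReal.one_le_ofReal.mp ((ENNReal.mul_le_mul_iff_left h0.ne' htop.ne).mp h)

end Doubling

lemma card_le_of_pairwiseDisjoint [MeasurableSpace X] {μ : Measure X} {ι : Type*}
    {F : Finset ι} {s : ι → Set X} {T : Set X} {c : ℝ≥0∞}
    (hdisj : (F : Set ι).PairwiseDisjoint s) (hmeas : ∀ i ∈ F, MeasurableSet (s i))
    (hsub : ∀ i ∈ F, s i ⊆ T) (hlow : ∀ i ∈ F, μ T ≤ c * μ (s i))
    (h0 : μ T ≠ 0) (htop : μ T ≠ ⊤) : (F.card : ℝ≥0∞) ≤ c := by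
  refine (ENNReal.mul_le_mul_iff_left h0 htop).mp ?_
  calc (F.card : ℝ≥0∞) * μ T = ∑ i ∈ F, μ T := by rw [Finset.sum_const, nsmul_eq_mul]
    _ ≤ ∑ i ∈ F, c * μ (s i) := Finset.sum_le_sum hlow
    _ = c * μ (⋃ i ∈ F, s i) := by rw [← Finset.mul_sum, measure_biUnion_finset hdisj hmeas]
    _ ≤ c * μ T := by gcongr; exact iUnion₂_subset hsub

lemma exists_maximal_pairwise_finset {r : X → X → Prop} {S : Set X} {N : ℕ}
    (hN : ∀ F : Finset X, ↑F ⊆ S → (F : Set X).Pairwise r → F.card ≤ N) :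
    ∃ F : Finset X, ↑F ⊆ S ∧ (F : Set X).Pairwise r ∧
      ∀ z ∈ S, z ∉ F → ∃ y ∈ F, ¬ (r z y ∧ r y z) := by
  classical
  obtain ⟨F, ⟨hFS, hF⟩, hmax⟩ := (measure fun F : Finset X => N - F.card).wf.has_min
    {F | ↑F ⊆ S ∧ (F : Set X).Pairwise r} ⟨∅, by simp⟩
  refine ⟨F, hFS, hF, fun z hz hzF => ?_⟩
  by_contra! hfar
  have hins : ↑(insert z F) ⊆ S ∧ (↑(insert z F) : Set X).Pairwise r := by
    rw [Finset.coe_insert]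
    exact ⟨insert_subset hz hFS, hF.insert_of_notMem (by exact_mod_cast hzF) hfar⟩
  have hcard := hN _ hins.1 hins.2
  rw [Finset.card_insert_of_notMem hzF] at hcard
  exact hmax _ hins (show N - (insert z F).card < N - F.card by
    rw [Finset.card_insert_of_notMem hzF]; omega)

section HomogeneousType

variable [TopologicalSpace X] [MeasurableSpace X] [OpensMeasurableSpace X] {μ : Measure X}
  {d : X → X → ℝ} {K A : ℝ}

lemma exists_card_le_of_separated (hd : QD d K) (hopen : ∀ x r, IsOpen (ball d x r))
    (hA : DoublingBalls μ d A) (x : X) {r u : ℝ} (hr : 0 < r) (hu : 0 < u) :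
    ∃ N : ℕ, ∀ F : Finset X, ↑F ⊆ ball d x r →
      (F : Set X).Pairwise (fun y z => 2 * K * u ≤ d y z) → F.card ≤ N := by
  have hK := hd.pos
  set R := K * (r + u)
  obtain ⟨n, hn⟩ := pow_unbounded_of_one_lt (K * (r + R) / u) (one_lt_two (α := ℝ))
  rw [div_lt_iff₀ hu] at hn
  refine ⟨⌈A⌉₊ ^ n, fun F hF hsep => ?_⟩
  have hmem : ∀ y ∈ F, d x y < r := fun y hy => hF hy
  have hcard : (F.card : ℝ≥0∞) ≤ ENNReal.ofReal A ^ n :=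
    card_le_of_pairwiseDisjoint (s := fun y => ball d y u) (T := ball d x R)
      (fun y hy z hz hyz => disjoint_ball_ball hd (hsep hy hz hyz))
      (fun y _ => (hopen y u).measurableSet)
      (fun y hy => ball_subset_ball hd
        (mul_le_mul_of_nonneg_left (by linarith [hmem y hy]) hK.le))
      (fun y hy => (measure_mono (ball_subset_ball hd (by
          rw [hd.symm]; nlinarith [mul_lt_mul_of_pos_left (hmem y hy) hK]))).trans
        (measure_ball_two_pow_mul_le hA y hu n))
      (hA x R (by positivity)).1.ne' (hA x R (by positivity)).2.1.ne
  have hA_le : ENNReal.ofReal A ≤ ⌈A⌉₊ :=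
    (ENNReal.ofReal_le_ofReal (Nat.le_ceil A)).trans_eq (ENNReal.ofReal_natCast _)
  exact_mod_cast hcard.trans (pow_le_pow_left' hA_le n)

lemma exists_separated_finset_measure_le (hd : QD d K) (hopen : ∀ x r, IsOpen (ball d x r))
    (hA : DoublingBalls μ d A) {x : X} {r u : ℝ} (hr : 0 < r) (hu : 0 < u) {S : Set X}
    (hS : S ⊆ ball d x r) {m : ℕ} (hm : 2 * K ≤ 2 ^ m) :
    ∃ F : Finset X, ↑F ⊆ S ∧ (F : Set X).Pairwise (fun y z => 2 * K * u ≤ d y z) ∧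
      μ S ≤ ENNReal.ofReal A ^ m * ∑ y ∈ F, μ (ball d y u) := by
  obtain ⟨N, hN⟩ := exists_card_le_of_separated hd hopen hA x hr hu
  obtain ⟨F, hFS, hsep, hmax⟩ :=
    exists_maximal_pairwise_finset (fun F hF => hN F (hF.trans hS))
  refine ⟨F, hFS, hsep, ?_⟩
  have hcover : S ⊆ ⋃ y ∈ F, ball d y (2 ^ m * u) := by
    intro z hz
    have hnet : ∃ y ∈ F, d y z < 2 * K * u := by
      by_cases hzF : z ∈ F
      · exact ⟨z, hzF, by rw [hd.self_eq_zero]; have := hd.pos; positivity⟩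
      · obtain ⟨y, hyF, hy⟩ := hmax z hz hzF
        rw [hd.symm z y, and_self, not_le] at hy
        exact ⟨y, hyF, hy⟩
    obtain ⟨y, hyF, hy⟩ := hnet
    exact mem_iUnion₂.mpr ⟨y, hyF, hy.trans_le (by gcongr)⟩
  calc μ S ≤ ∑ y ∈ F, μ (ball d y (2 ^ m * u)) :=
        (measure_mono hcover).trans (measure_biUnion_finset_le F _)
    _ ≤ ∑ y ∈ F, ENNReal.ofReal A ^ m * μ (ball d y u) :=
        Finset.sum_le_sum fun y _ => measure_ball_two_pow_mul_le hA y hu m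
    _ = ENNReal.ofReal A ^ m * ∑ y ∈ F, μ (ball d y u) := (Finset.mul_sum _ _ _).symm


end HomogeneousType

section Hole

variable {d : X → X → ℝ} {K : ℝ} {E : Set X} {x : X} {r : ℝ}

lemma le_hole {s : ℝ} (hs : 0 < s) (hsr : s ≤ 2 * K * r) {y : X}
    (hy : ball d y s ⊆ ball d x r \ E) : s ≤ hole d K E x r :=
  le_csSup ⟨2 * K * r, fun _ ht => ht.2.1⟩ ⟨hs, hsr, y, hy⟩

lemma hole_le (hK : 0 ≤ K) (hr : 0 ≤ r) : hole d K E x r ≤ 2 * K * r :=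
  Real.sSup_le (fun _ hs => hs.2.1) (by positivity)

lemma exists_ball_subset_of_lt_hole {t : ℝ} (ht₀ : 0 ≤ t) (ht : t < hole d K E x r) :
    ∃ s y, t < s ∧ ball d y s ⊆ ball d x r \ E := by
  rcases Set.eq_empty_or_nonempty
      {s | 0 < s ∧ s ≤ 2 * K * r ∧ ∃ y, ball d y s ⊆ ball d x r \ E} with h | h
  · rw [hole, h, Real.sSup_empty] at ht
    linarith
  · obtain ⟨s, ⟨-, -, y, hy⟩, hts⟩ := exists_lt_of_lt_csSup h ht
    exact ⟨s, y, hts, hy⟩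

lemma hole_pos (hd : QD d K) (hr : 0 < r) {y : X} (hy : y ∈ ball d x (r / (2 * K)))
    (hyE : 0 < distE d E y) : 0 < hole d K E x r := by
  have hK := hd.pos
  have hs : 0 < min (distE d E y) (r / (2 * K)) := lt_min hyE (by positivity)
  refine hs.trans_le (le_hole hs ?_ (y := y) (subset_sdiff.mpr ⟨?_, ?_⟩))
  · calc min (distE d E y) (r / (2 * K)) ≤ r / (2 * K) := min_le_right _ _
      _ ≤ 2 * K * r := by
        have hKK : 1 ≤ K * K := by nlinarith [hd.1]
        rw [div_le_iff₀ (by positivity)]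
        nlinarith [mul_le_mul_of_nonneg_right hKK hr.le]
  · exact ball_subset_ball_of_mem_half hd hy (min_le_right _ _)
  · exact disjoint_ball_of_le_distE hd (min_le_left _ _)

end Hole

lemma ofReal_rpow_mul_rpow_neg {t : ℝ} (ht : 0 < t) (y : ℝ) :
    ENNReal.ofReal t ^ y * ENNReal.ofReal t ^ (-y) = 1 := by
  rw [← ENNReal.rpow_add _ _ (ENNReal.ofReal_pos.mpr ht).ne' ENNReal.ofReal_ne_top,
    add_neg_cancel, ENNReal.rpow_zero]

section A1

variable [TopologicalSpace X] [MeasurableSpace X] [OpensMeasurableSpace X] {μ : Measure X}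
  {d : X → X → ℝ} {K A : ℝ} {E : Set X} {α : ℝ} {x : X} {r : ℝ}

lemma hole_pos_of_lintegral_ne_top (hd : QD d K) (hopen : ∀ x r, IsOpen (ball d x r))
    (hA : DoublingBalls μ d A) (hE : E.Nonempty) (hα : 0 < α) (hr : 0 < r)
    (hfin : ∫⁻ z in ball d x (r / (2 * K)), wgt d E α z ∂μ ≠ ⊤) : 0 < hole d K E x r := by
  have hμ := (hA x (r / (2 * K)) (by have := hd.pos; positivity)).1.ne'
  obtain ⟨y, hy, hyw⟩ :=
    Measure.exists_mem_of_measure_ne_zero_of_ae hμ (ae_lt_top (measurable_wgt hd hopen hE) hfin)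
  exact hole_pos hd hr hy (distE_pos_of_wgt_ne_top hα hyw.ne)

/-- A hole of radius `s > ρ/2` keeps the concentric ball of radius `s/(2K)` at distance
`≥ ρ/(4K)` from `E`, and that ball has positive measure. -/
lemma essInf_wgt_le (hd : QD d K) (hopen : ∀ x r, IsOpen (ball d x r))
    (hA : DoublingBalls μ d A) (hE : E.Nonempty) (hα : 0 < α) (hρ : 0 < hole d K E x r) :
    essInf (wgt d E α) (μ.restrict (ball d x r)) ≤
      ENNReal.ofReal (hole d K E x r / (4 * K)) ^ (-α) := by
  have hK := hd.pos
  set ρ := hole d K E x r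
  obtain ⟨s, y, hs, hy⟩ := exists_ball_subset_of_lt_hole (half_pos hρ).le (half_lt_self hρ)
  have hs₀ : 0 < s / (2 * K) := by have := (half_pos hρ).trans hs; positivity
  have hsub : ball d y (s / (2 * K)) ⊆ ball d x r :=
    (ball_mono d y (div_le_self (by linarith [half_pos hρ]) (by linarith [hd.1]))).trans
      (hy.trans sdiff_subset)
  have hpos : μ.restrict (ball d x r) (ball d y (s / (2 * K))) ≠ 0 := by
    rw [Measure.restrict_apply' (hopen x r).measurableSet, inter_eq_self_of_subset_left hsub]
    exact (hA y _ hs₀).1.ne'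
  obtain ⟨z, hz, hzw⟩ :=
    Measure.exists_mem_of_measure_ne_zero_of_ae hpos
      (ae_restrict_of_ae (ae_essInf_le (f := wgt d E α)))
  refine hzw.trans (ofReal_rpow_neg_anti hα ?_)
  calc ρ / (4 * K) = ρ / 2 / (2 * K) := by ring
    _ ≤ s / (2 * K) := by gcongr
    _ ≤ distE d E z := le_distE_of_disjoint_ball hd hE (subset_sdiff.mp hy).2 hz

lemma mul_measure_inter_distE_lt_le (hd : QD d K) (hopen : ∀ x r, IsOpen (ball d x r))
    (hE : E.Nonempty) (hα : 0 < α) {s : Set X} (hs : MeasurableSet s) (t : ℝ) :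
    ENNReal.ofReal t ^ (-α) * μ (s ∩ {z | distE d E z < t}) ≤ ∫⁻ z in s, wgt d E α z ∂μ :=
  calc ENNReal.ofReal t ^ (-α) * μ (s ∩ {z | distE d E z < t})
      = ENNReal.ofReal t ^ (-α) * μ.restrict s {z | distE d E z < t} := by
        rw [Measure.restrict_apply' hs, inter_comm]
    _ ≤ ENNReal.ofReal t ^ (-α) * μ.restrict s {z | ENNReal.ofReal t ^ (-α) ≤ wgt d E α z} := by
        gcongr
        exact fun hz => ofReal_rpow_neg_anti hα (le_of_lt hz)
    _ ≤ ∫⁻ z in s, wgt d E α z ∂μ := mul_meas_ge_le_lintegral (measurable_wgt hd hopen hE) _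

lemma measure_ball_inter_distE_lt_le (hd : QD d K) (hopen : ∀ x r, IsOpen (ball d x r))
    (hA : DoublingBalls μ d A) (hE : E.Nonempty) (hα : 0 < α) {C c ε : ℝ}
    (hA1 : ∫⁻ z in ball d x r, wgt d E α z ∂μ ≤
      ENNReal.ofReal C * essInf (wgt d E α) (μ.restrict (ball d x r)) * μ (ball d x r))
    (hρ : 0 < hole d K E x r) (hc : 0 < c) (hcε : C * (4 * K * c) ^ α ≤ ε) :
    μ (ball d x r ∩ {z | distE d E z < c * hole d K E x r}) ≤
      ENNReal.ofReal ε * μ (ball d x r) := by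
  have hK := hd.pos
  set ρ := hole d K E x r
  set near := ball d x r ∩ {z | distE d E z < c * ρ}
  have hmarkov : ENNReal.ofReal (c * ρ) ^ (-α) * μ near ≤
      ENNReal.ofReal C * ENNReal.ofReal (ρ / (4 * K)) ^ (-α) * μ (ball d x r) :=
    (mul_measure_inter_distE_lt_le hd hopen hE hα (hopen x r).measurableSet _).trans
      (hA1.trans (by gcongr; exact essInf_wgt_le hd hopen hA hE hα hρ))
  have hcρ : ENNReal.ofReal (c * ρ) =
      ENNReal.ofReal (4 * K * c) * ENNReal.ofReal (ρ / (4 * K)) := by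
    rw [← ENNReal.ofReal_mul (by positivity)]
    congr 1
    field_simp
  calc μ near = ENNReal.ofReal (c * ρ) ^ α * (ENNReal.ofReal (c * ρ) ^ (-α) * μ near) := by
        rw [← mul_assoc, ofReal_rpow_mul_rpow_neg (by positivity), one_mul]
    _ ≤ ENNReal.ofReal (c * ρ) ^ α *
          (ENNReal.ofReal C * ENNReal.ofReal (ρ / (4 * K)) ^ (-α) * μ (ball d x r)) := by
        gcongr
    _ = ENNReal.ofReal C * ENNReal.ofReal (4 * K * c) ^ α *
          (ENNReal.ofReal (ρ / (4 * K)) ^ α * ENNReal.ofReal (ρ / (4 * K)) ^ (-α)) *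
          μ (ball d x r) := by
        rw [hcρ, ENNReal.mul_rpow_of_nonneg _ _ hα.le]
        ring
    _ = ENNReal.ofReal (C * (4 * K * c) ^ α) * μ (ball d x r) := by
        rw [ofReal_rpow_mul_rpow_neg (by positivity), mul_one,
          ENNReal.ofReal_rpow_of_nonneg (by positivity) hα.le,
          ← ENNReal.ofReal_mul' (by positivity)]
    _ ≤ ENNReal.ofReal ε * μ (ball d x r) := by gcongr

lemma measure_ball_le_two_mul_measure_far (hd : QD d K) (hopen : ∀ x r, IsOpen (ball d x r))
    (hA : DoublingBalls μ d A) (hE : E.Nonempty) (hα : 0 < α) {C c : ℝ} {m : ℕ} (hr : 0 < r)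
    (hA1 : ∫⁻ z in ball d x r, wgt d E α z ∂μ ≤
      ENNReal.ofReal C * essInf (wgt d E α) (μ.restrict (ball d x r)) * μ (ball d x r))
    (hρ : 0 < hole d K E x r) (hc : 0 < c) (hcA : C * (4 * K * c) ^ α ≤ (2 * A ^ m)⁻¹) :
    μ (ball d x r) ≤ 2 * ENNReal.ofReal A ^ m *
      μ (ball d x (r / 2 ^ m) ∩ {z | c * hole d K E x r ≤ distE d E z}) := by
  set ρ := hole d K E x r
  set D := ENNReal.ofReal A ^ m with hD
  set near := ball d x r ∩ {z | distE d E z < c * ρ}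
  set far := ball d x (r / 2 ^ m) ∩ {z | c * ρ ≤ distE d E z}
  have hA₀ : 0 < A := zero_lt_one.trans_le (one_le_of_doublingBalls hA x)
  have hnear : D * μ near ≤ μ (ball d x r) / 2 :=
    calc D * μ near ≤ D * (ENNReal.ofReal (2 * A ^ m)⁻¹ * μ (ball d x r)) := by
          gcongr
          exact measure_ball_inter_distE_lt_le hd hopen hA hE hα hA1 hρ hc hcA
      _ = μ (ball d x r) / 2 := by
          rw [← mul_assoc, hD, ← ENNReal.ofReal_pow hA₀.le, ← ENNReal.ofReal_mul (by positivity),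
            show A ^ m * (2 * A ^ m)⁻¹ = 2⁻¹ by field_simp [hA₀.ne'],
            ENNReal.ofReal_inv_of_pos two_pos,
            ENNReal.ofReal_ofNat, ENNReal.div_eq_inv_mul]
  have hsplit : ball d x (r / 2 ^ m) ⊆ near ∪ far := fun z hz => by
    by_cases hzE : distE d E z < c * ρ
    · exact Or.inl ⟨ball_mono d x (div_le_self hr.le (one_le_pow₀ one_le_two)) hz, hzE⟩
    · exact Or.inr ⟨hz, not_lt.mp hzE⟩
  have hdoub : μ (ball d x r) ≤ D * μ (ball d x (r / 2 ^ m)) := by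
    have h := measure_ball_two_pow_mul_le hA x (by positivity : 0 < r / 2 ^ m) m
    rwa [mul_div_cancel₀ _ (by positivity)] at h
  have hhalf : μ (ball d x r) / 2 ≤ D * μ far := by
    refine ENNReal.le_of_add_le_add_left
      (ENNReal.div_ne_top (hA x r hr).2.1.ne two_ne_zero) ?_
    calc μ (ball d x r) / 2 + μ (ball d x r) / 2 = μ (ball d x r) := ENNReal.add_halves _
      _ ≤ D * (μ near + μ far) :=
          hdoub.trans (by gcongr; exact (measure_mono hsplit).trans (measure_union_le _ _))
      _ = D * μ near + D * μ far := mul_add _ _ _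
      _ ≤ μ (ball d x r) / 2 + D * μ far := by gcongr
  calc μ (ball d x r) = 2 * (μ (ball d x r) / 2) :=
        (ENNReal.mul_div_cancel two_ne_zero ENNReal.ofNat_ne_top).symm
    _ ≤ 2 * (D * μ far) := by gcongr
    _ = 2 * D * μ far := (mul_assoc _ _ _).symm

end A1

section Porosity

variable {d : X → X → ℝ} {K : ℝ} {E : Set X}

lemma ball_subset_sdiff_of_le_distE (hd : QD d K) {x y : X} {r c γ ρ : ℝ} {m : ℕ}
    (hr : 0 ≤ r) (hm : 2 * K ≤ 2 ^ m) (hρ : 0 ≤ ρ) (hρr : ρ ≤ 2 * K * r) (hγc : γ ≤ c)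
    (hγK : γ ≤ 1 / (4 * K ^ 2)) (hy : y ∈ ball d x (r / 2 ^ m) ∩ {z | c * ρ ≤ distE d E z}) :
    ball d y (γ * ρ) ⊆ ball d x r \ E := by
  have hK := hd.pos
  refine subset_sdiff.mpr ⟨ball_subset_ball_of_mem_half hd ?_ ?_,
    disjoint_ball_of_le_distE hd ((mul_le_mul_of_nonneg_right hγc hρ).trans hy.2)⟩
  · exact ball_mono d x (div_le_div_of_nonneg_left hr (by positivity) hm) hy.1
  · calc γ * ρ ≤ 1 / (4 * K ^ 2) * (2 * K * r) := mul_le_mul hγK hρr hρ (by positivity)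
      _ = r / (2 * K) := by field_simp; ring

lemma weaklyPorousWith_of_finset [MeasurableSpace X] {μ : Measure X} {σ γ : ℝ}
    (h : ∀ x r, 0 < r → ∃ (F : Finset X) (u : ℝ),
      (F : Set X).PairwiseDisjoint (fun y => ball d y u) ∧ (∀ y ∈ F, ball d y u ⊆ ball d x r \ E) ∧
      γ * hole d K E x r ≤ u ∧ u ≤ 2 * K * r ∧
      ENNReal.ofReal σ * μ (ball d x r) ≤ ∑ y ∈ F, μ (ball d y u)) :
    WeaklyPorousWith μ d K E σ γ := by
  intro x r hr
  obtain ⟨F, u, hdisj, hsub, hγ, hu, hμ⟩ := h x r hr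
  refine ⟨F.card, fun i => F.equivFin.symm i, fun _ => u, fun i j hij => ?_,
    fun i => hsub _ (F.equivFin.symm i).2, fun _ => hγ, fun _ => hu, ?_⟩
  · exact hdisj (F.equivFin.symm i).2 (F.equivFin.symm j).2
      fun h => hij (F.equivFin.symm.injective (Subtype.ext h))
  · calc ENNReal.ofReal σ * μ (ball d x r) ≤ ∑ y ∈ F, μ (ball d y u) := hμ
      _ = _ := by rw [← Finset.sum_coe_sort, ← F.equivFin.symm.sum_comp]

lemma exists_pos_mul_mul_rpow_eq {C L α ε : ℝ} (hC : 0 < C) (hL : 0 < L) (hα : 0 < α)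
    (hε : 0 < ε) : ∃ c > 0, C * (L * c) ^ α = ε :=
  ⟨(ε / C) ^ α⁻¹ / L, by positivity, by
    rw [mul_div_cancel₀ _ hL.ne', Real.rpow_inv_rpow (by positivity) hα.ne',
      mul_div_cancel₀ _ hC.ne']⟩

end Porosity

/-- If `d(·,E)^{-α} ∈ A₁(X,d,μ)` for some `α > 0`, then `E` is weakly porous. -/
theorem statement10 {X : Type*} [TopologicalSpace X] [MeasurableSpace X] [BorelSpace X]
    (μ : Measure X) (d : X → X → ℝ) (K A : ℝ)
    (hd : QD d K) (hb : BallsBasis d) (hA : DoublingBalls μ d A)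
    (E : Set X) (hE : E.Nonempty)
    (α : ℝ) (hα : 0 < α) (hA1 : MemA1 μ d (wgt d E α)) :
    WeaklyPorous μ d K E := by
  obtain ⟨hfin, C, hC, hCB⟩ := hA1
  have hK := hd.pos
  have hA₁ : 1 ≤ A := one_le_of_doublingBalls hA hE.some
  obtain ⟨m, hm⟩ : ∃ m : ℕ, 2 * K ≤ 2 ^ m :=
    (pow_unbounded_of_one_lt (2 * K) (one_lt_two (α := ℝ))).imp fun _ => le_of_lt
  obtain ⟨c, hc, hcA⟩ := exists_pos_mul_mul_rpow_eq hC (by positivity : 0 < 4 * K) hα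
    (by positivity : 0 < (2 * A ^ m)⁻¹)
  set γ := min c (1 / (4 * K ^ 2))
  have hγK : γ ≤ 1 / (4 * K ^ 2) := min_le_right _ _
  have hγ₁ : γ < 1 := hγK.trans_lt <| by rw [div_lt_one (by positivity)]; nlinarith [hd.1]
  have hσ₁ : 1 < 2 * (A ^ m) ^ 2 := by nlinarith [one_le_pow₀ (n := m) hA₁]
  refine ⟨(2 * (A ^ m) ^ 2)⁻¹, γ, ⟨by positivity, inv_lt_one_of_one_lt₀ hσ₁⟩,
    ⟨by positivity, hγ₁⟩, weaklyPorousWith_of_finset fun x r hr => ?_⟩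
  have hρ := hole_pos_of_lintegral_ne_top hd hb.1 hA hE hα hr (hfin x _ (by positivity)).ne
  obtain ⟨F, hFS, hFsep, hμF⟩ := exists_separated_finset_measure_le hd hb.1 hA
    (by positivity : 0 < r / 2 ^ m) (by positivity : 0 < γ * hole d K E x r) inter_subset_left hm
  refine ⟨F, γ * hole d K E x r, fun y hy z hz hyz => disjoint_ball_ball hd (hFsep hy hz hyz),
    fun y hy => ball_subset_sdiff_of_le_distE hd hr.le hm hρ.le (hole_le hK.le hr.le)
      (min_le_left _ _) hγK (hFS hy), le_rfl,
    (mul_le_of_le_one_left hρ.le hγ₁.le).trans (hole_le hK.le hr.le), ?_⟩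
  rw [ENNReal.ofReal_inv_of_pos (by positivity),
    ENNReal.inv_mul_le_iff (ENNReal.ofReal_pos.mpr (by positivity)).ne' ENNReal.ofReal_ne_top]
  calc μ (ball d x r) ≤ 2 * ENNReal.ofReal A ^ m * μ _ :=
        measure_ball_le_two_mul_measure_far hd hb.1 hA hE hα hr (hCB x r hr) hρ hc hcA.le
    _ ≤ 2 * ENNReal.ofReal A ^ m * (ENNReal.ofReal A ^ m * ∑ y ∈ F, μ (ball d y _)) := by
        gcongr
    _ = ENNReal.ofReal (2 * (A ^ m) ^ 2) * ∑ y ∈ F, μ (ball d y _) := by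
        rw [ENNReal.ofReal_mul zero_le_two, ENNReal.ofReal_pow (by positivity),
          ENNReal.ofReal_pow (by positivity), ENNReal.ofReal_ofNat]
        ring

end WPA1
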